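/- Let r be a regular reward function, p ∈ (0,1), s := 1/(1−p), ω := η_s^{-1}, and c > 0. Then the supremum, over all sequences (u_i)_{i≥1} of nonnegative reals with Σ_{i=1}^∞ u_i ≤ c, of Σ_{i=1}^∞ p(1−p)^{i−1} r(u_i) equals Σ_{i=1}^∞ p(1−p)^{i−1} r(κ̄_s^{(i−1)}(ω(c))), and it is attained by the sequence u_i = κ̄_s^{(i−1)}(ω(c)), which satisfies Σ_{i=1}^∞ u_i = c. -/

import Mathlib

open Set Filter MeasureTheory

/-- A regular reward function `r` with derivative `r'`: `r : [0,∞) → [0,∞)` is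
nondecreasing, Lipschitz, strictly concave, differentiable, with `r 0 = 0`; its
derivative `r'` is continuous, strictly decreasing, positive, and tends to `0` at `+∞`.
For each `s ≥ 1`, `τ s` is the unique point with `r' (τ s) = r' 0 / s`, and
`κ s : [τ s, ∞) → [0, ∞)` is defined by the relation `r' (κ s x) = s * r' x`
(for `s = 1` these reduce to `τ 1 = 0` and `κ 1 = id`); regularity means `κ s` is
convex on `[τ s, ∞)` for all `s > 1`. -/
structure RegularReward where
  r : ℝ → ℝ
  r' : ℝ → ℝ
  r_zero : r 0 = 0
  r_nonneg : ∀ x : ℝ, 0 ≤ x → 0 ≤ r x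
  r_mono : MonotoneOn r (Ici (0 : ℝ))
  r_lip : ∃ K : NNReal, LipschitzOnWith K r (Ici (0 : ℝ))
  r_strictConcave : StrictConcaveOn ℝ (Ici (0 : ℝ)) r
  r_hasDeriv : ∀ x : ℝ, 0 ≤ x → HasDerivWithinAt r (r' x) (Ici (0 : ℝ)) x
  deriv_cont : ContinuousOn r' (Ici (0 : ℝ))
  deriv_strictAnti : StrictAntiOn r' (Ici (0 : ℝ))
  deriv_pos : ∀ x : ℝ, 0 ≤ x → 0 < r' x
  deriv_tendsto_zero : Tendsto r' atTop (nhds 0)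
  τ : ℝ → ℝ
  κ : ℝ → ℝ → ℝ
  τ_nonneg : ∀ s : ℝ, 1 ≤ s → 0 ≤ τ s
  τ_spec : ∀ s : ℝ, 1 ≤ s → r' (τ s) = r' 0 / s
  κ_nonneg : ∀ s : ℝ, 1 ≤ s → ∀ x : ℝ, τ s ≤ x → 0 ≤ κ s x
  κ_spec : ∀ s : ℝ, 1 ≤ s → ∀ x : ℝ, τ s ≤ x → r' (κ s x) = s * r' x
  κ_convex : ∀ s : ℝ, 1 < s → ConvexOn ℝ (Ici (τ s)) (κ s)

namespace RegularReward

/-- The extension `κ̄_s (x) := κ_s (max x τ_s)` of `κ_s` to `[0, ∞)`. -/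
noncomputable def kbar (R : RegularReward) (s : ℝ) (x : ℝ) : ℝ :=
  R.κ s (max x (R.τ s))

/-- `M_s(x) = ⌈ln (r' 0 / r' x) / ln s⌉`. -/
noncomputable def M (R : RegularReward) (s : ℝ) (x : ℝ) : ℕ :=
  ⌈Real.log (R.r' 0 / R.r' x) / Real.log s⌉₊

/-- `M̃_s(x) = ⌊ln (r' 0 / r' x) / ln s⌋ + 1`. -/
noncomputable def Mt (R : RegularReward) (s : ℝ) (x : ℝ) : ℕ :=
  ⌊Real.log (R.r' 0 / R.r' x) / Real.log s⌋₊ + 1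

/-- `η_s(x) := ∑_{i=1}^∞ κ̄_s^{(i-1)}(x)`, a finite sum since `κ̄_s^{(i)}(x) = 0` for
`i ≥ M_s(x)`. -/
noncomputable def η (R : RegularReward) (s : ℝ) (x : ℝ) : ℝ :=
  ∑' i : ℕ, (R.kbar s)^[i] x

end RegularReward

/-!
The candidate `vᵢ = κ̄_s^{(i)}(ω c)` spends the whole budget since `η_s (ω c) = c`. Along the
iteration `r'(κ̄_s x) ≤ s · r'(x)`, with equality whenever `κ̄_s x > 0` (then `x > τ_s` and
`κ̄_s x = κ_s x`). As `(1 - p) s = 1`, the weighted marginal rewards `p (1-p)^i r'(vᵢ)` are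
therefore all at most `L = p r'(v₀)`, with equality wherever `vᵢ > 0`: these are the KKT
conditions, and the tangent-line inequality of the concave `r` turns them into optimality of `v`.
-/

theorem ConcaveOn.le_add_mul_sub_of_hasDerivWithinAt {S : Set ℝ} {f : ℝ → ℝ} {f' x y : ℝ}
    (hf : ConcaveOn ℝ S f) (hx : x ∈ S) (hy : y ∈ S) (hd : HasDerivWithinAt f f' S x) :
    f y ≤ f x + f' * (y - x) := by
  rcases lt_trichotomy y x with hyx | rfl | hxy
  · have h := hf.le_slope_of_hasDerivWithinAt hy hx hyx hd
    rw [slope_def_field, le_div_iff₀ (sub_pos.2 hyx)] at h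
    linarith
  · simp
  · have h := hf.slope_le_of_hasDerivWithinAt hx hy hxy hd
    rw [slope_def_field, div_le_iff₀ (sub_pos.2 hxy)] at h
    linarith

/-- KKT sufficiency: `L` is the Lagrange multiplier of the budget constraint. -/
theorem tsum_mul_le_of_marginal_le {f f' : ℝ → ℝ} (hf : ConcaveOn ℝ (Ici 0) f)
    (hf' : ∀ x, 0 ≤ x → HasDerivWithinAt f (f' x) (Ici 0) x)
    {w u v : ℕ → ℝ} {L : ℝ} (hw : ∀ i, 0 ≤ w i) (hu : ∀ i, 0 ≤ u i) (hv : ∀ i, 0 ≤ v i)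
    (hL : 0 ≤ L) (hle : ∀ i, w i * f' (v i) ≤ L) (heq : ∀ i, 0 < v i → w i * f' (v i) = L)
    (hsu : Summable u) (hsv : Summable v) (hsum : ∑' i, u i ≤ ∑' i, v i)
    (hfu : Summable fun i => w i * f (u i)) (hfv : Summable fun i => w i * f (v i)) :
    ∑' i, w i * f (u i) ≤ ∑' i, w i * f (v i) := by
  have termwise : ∀ i, w i * f (u i) ≤ w i * f (v i) + L * (u i - v i) := by
    intro i
    have tangent := hf.le_add_mul_sub_of_hasDerivWithinAt (mem_Ici.2 (hv i)) (mem_Ici.2 (hu i))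
      (hf' _ (hv i))
    have marginal : w i * f' (v i) * (u i - v i) ≤ L * (u i - v i) := by
      rcases (hv i).lt_or_eq with hpos | hzero
      · rw [heq i hpos]
      · exact mul_le_mul_of_nonneg_right (hle i) (by rw [← hzero, sub_zero]; exact hu i)
    nlinarith [mul_le_mul_of_nonneg_left tangent (hw i)]
  have hdiff : Summable fun i => L * (u i - v i) := (hsu.sub hsv).mul_left L
  calc ∑' i, w i * f (u i) ≤ ∑' i, (w i * f (v i) + L * (u i - v i)) :=
        hfu.tsum_le_tsum termwise (hfv.add hdiff)
    _ = ∑' i, w i * f (v i) + L * (∑' i, u i - ∑' i, v i) := by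
        rw [hfv.tsum_add hdiff, tsum_mul_left, hsu.tsum_sub hsv]
    _ ≤ ∑' i, w i * f (v i) := by nlinarith

namespace RegularReward

variable (R : RegularReward)

theorem r_le_mul : ∃ K : ℝ, ∀ x, 0 ≤ x → R.r x ≤ K * x := by
  obtain ⟨K, hK⟩ := R.r_lip
  refine ⟨K, fun x hx => ?_⟩
  have h := hK.dist_le_mul x (mem_Ici.2 hx) 0 self_mem_Ici
  rw [R.r_zero, Real.dist_eq, Real.dist_eq, sub_zero, sub_zero, abs_of_nonneg hx] at h
  exact (le_abs_self _).trans h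

theorem summable_mul_r {w u : ℕ → ℝ} {C : ℝ} (hw : ∀ i, 0 ≤ w i) (hwC : ∀ i, w i ≤ C)
    (hu : ∀ i, 0 ≤ u i) (hsu : Summable u) : Summable fun i => w i * R.r (u i) := by
  obtain ⟨K, hK⟩ := R.r_le_mul
  refine Summable.of_nonneg_of_le (fun i => mul_nonneg (hw i) (R.r_nonneg _ (hu i)))
    (fun i => ?_) (hsu.mul_left (C * K))
  calc w i * R.r (u i) ≤ C * R.r (u i) :=
        mul_le_mul_of_nonneg_right (hwC i) (R.r_nonneg _ (hu i))
    _ ≤ C * (K * u i) := mul_le_mul_of_nonneg_left (hK _ (hu i)) ((hw i).trans (hwC i))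
    _ = C * K * u i := by ring

variable {R} {s : ℝ}

theorem κ_τ_eq_zero (hs : 1 ≤ s) : R.κ s (R.τ s) = 0 := by
  have hs0 : s ≠ 0 := by positivity
  refine R.deriv_strictAnti.injOn (R.κ_nonneg s hs _ le_rfl) self_mem_Ici ?_
  rw [R.κ_spec s hs _ le_rfl, R.τ_spec s hs, mul_div_cancel₀ _ hs0]

theorem kbar_nonneg (hs : 1 ≤ s) (x : ℝ) : 0 ≤ R.kbar s x :=
  R.κ_nonneg s hs _ (le_max_right _ _)

theorem kbar_eq_zero (hs : 1 ≤ s) {x : ℝ} (hx : x ≤ R.τ s) : R.kbar s x = 0 := by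
  rw [kbar, max_eq_right hx, κ_τ_eq_zero hs]

theorem τ_lt_of_kbar_pos (hs : 1 ≤ s) {x : ℝ} (hx : 0 < R.kbar s x) : R.τ s < x :=
  lt_of_not_ge fun h => hx.ne' (kbar_eq_zero hs h)

theorem r'_kbar_of_τ_le (hs : 1 ≤ s) {x : ℝ} (hx : R.τ s ≤ x) :
    R.r' (R.kbar s x) = s * R.r' x := by
  rw [kbar, max_eq_left hx, R.κ_spec s hs x hx]

theorem r'_kbar_le (hs : 1 ≤ s) {x : ℝ} (hx : 0 ≤ x) : R.r' (R.kbar s x) ≤ s * R.r' x := by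
  rcases le_or_gt (R.τ s) x with hτx | hxτ
  · exact (r'_kbar_of_τ_le hs hτx).le
  · have hs0 : s ≠ 0 := by positivity
    have h0 : R.r' 0 = s * R.r' (R.τ s) := by rw [R.τ_spec s hs, mul_div_cancel₀ _ hs0]
    rw [kbar_eq_zero hs hxτ.le, h0]
    exact mul_le_mul_of_nonneg_left (R.deriv_strictAnti hx (R.τ_nonneg s hs) hxτ).le
      (by positivity)

theorem iterate_kbar_nonneg (hs : 1 ≤ s) {x : ℝ} (hx : 0 ≤ x) (i : ℕ) :
    0 ≤ (R.kbar s)^[i] x := by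
  cases i with
  | zero => exact hx
  | succ i => rw [Function.iterate_succ_apply']; exact kbar_nonneg hs _

theorem r'_iterate_kbar_le (hs : 1 ≤ s) {x : ℝ} (hx : 0 ≤ x) (i : ℕ) :
    R.r' ((R.kbar s)^[i] x) ≤ s ^ i * R.r' x := by
  induction i with
  | zero => simp
  | succ i ih =>
    rw [Function.iterate_succ_apply', pow_succ']
    calc R.r' (R.kbar s ((R.kbar s)^[i] x)) ≤ s * R.r' ((R.kbar s)^[i] x) :=
          r'_kbar_le hs (iterate_kbar_nonneg hs hx i)
      _ ≤ s * (s ^ i * R.r' x) := mul_le_mul_of_nonneg_left ih (by positivity)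
      _ = s * s ^ i * R.r' x := by ring

theorem r'_iterate_kbar_of_pos (hs : 1 ≤ s) {x : ℝ} {i : ℕ} (hi : 0 < (R.kbar s)^[i] x) :
    R.r' ((R.kbar s)^[i] x) = s ^ i * R.r' x := by
  induction i with
  | zero => simp
  | succ i ih =>
    rw [Function.iterate_succ_apply'] at hi ⊢
    have hτ := τ_lt_of_kbar_pos hs hi
    rw [r'_kbar_of_τ_le hs hτ.le, ih ((R.τ_nonneg s hs).trans_lt hτ), pow_succ']
    ring

end RegularReward

theorem bernoulli_allocation_optimal_general (R : RegularReward) (p : ℝ) (hp : p ∈ Ioo (0 : ℝ) 1)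
    (s : ℝ) (hs : s = 1 / (1 - p)) (c : ℝ) (hc : 0 < c)
    (ω : ℝ → ℝ)
    (hω_nonneg : ∀ x : ℝ, 0 ≤ x → 0 ≤ ω x)
    (hω_rightInv : ∀ x : ℝ, 0 ≤ x → R.η s (ω x) = x) :
    IsGreatest
      {v : ℝ | ∃ u : ℕ → ℝ, (∀ i : ℕ, 0 ≤ u i) ∧ Summable u ∧ (∑' i : ℕ, u i) ≤ c ∧
        v = ∑' i : ℕ, p * (1 - p) ^ i * R.r (u i)}
      (∑' i : ℕ, p * (1 - p) ^ i * R.r ((R.kbar s)^[i] (ω c))) ∧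
      (∑' i : ℕ, (R.kbar s)^[i] (ω c)) = c := by
  obtain ⟨hp0, hp1⟩ := hp
  have hs1 : 1 ≤ s := by rw [hs, le_div_iff₀ (by linarith)]; linarith
  have hω0 : 0 ≤ ω c := hω_nonneg c hc.le
  have hw : ∀ i : ℕ, 0 ≤ p * (1 - p) ^ i := fun i =>
    mul_nonneg hp0.le (pow_nonneg (by linarith) i)
  have hwp : ∀ i : ℕ, p * (1 - p) ^ i ≤ p := fun i =>
    mul_le_of_le_one_right hp0.le (pow_le_one₀ (by linarith) (by linarith))
  have hws : ∀ i : ℕ, p * (1 - p) ^ i * s ^ i = p := fun i => by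
    rw [mul_assoc, ← mul_pow, hs, mul_one_div_cancel (by linarith), one_pow, mul_one]
  set v : ℕ → ℝ := fun i => (R.kbar s)^[i] (ω c)
  have hv : ∀ i, 0 ≤ v i := RegularReward.iterate_kbar_nonneg hs1 hω0
  have hsum : ∑' i, v i = c := hω_rightInv c hc.le
  have hsv : Summable v := by
    by_contra h
    rw [tsum_eq_zero_of_not_summable h] at hsum
    exact hc.ne hsum
  have marginal_le : ∀ i, p * (1 - p) ^ i * R.r' (v i) ≤ p * R.r' (ω c) := fun i =>
    calc p * (1 - p) ^ i * R.r' (v i)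
        ≤ p * (1 - p) ^ i * (s ^ i * R.r' (ω c)) :=
          mul_le_mul_of_nonneg_left (RegularReward.r'_iterate_kbar_le hs1 hω0 i) (hw i)
      _ = p * R.r' (ω c) := by rw [← mul_assoc, hws]
  have marginal_eq : ∀ i, 0 < v i → p * (1 - p) ^ i * R.r' (v i) = p * R.r' (ω c) :=
    fun i hi => by rw [RegularReward.r'_iterate_kbar_of_pos hs1 hi, ← mul_assoc, hws]
  refine ⟨⟨⟨v, hv, hsv, hsum.le, rfl⟩, ?_⟩, hsum⟩
  rintro _ ⟨u, hu, hsu, hsuc, rfl⟩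
  exact tsum_mul_le_of_marginal_le R.r_strictConcave.concaveOn R.r_hasDeriv hw hu hv
    (mul_nonneg hp0.le (R.deriv_pos _ hω0).le) marginal_le marginal_eq hsu hsv
    (hsuc.trans hsum.ge) (R.summable_mul_r hw hwp hu hsu) (R.summable_mul_r hw hwp hv hsv)

/-- **The Bernoulli allocation problem** (from the proof of Theorem 3). Let `r` be a
regular reward function, `p ∈ (0,1)`, `s = 1/(1-p)`, `ω = η_s⁻¹`, and `c > 0`. Then the
supremum of `∑_{i=1}^∞ p (1-p)^{i-1} r(u_i)` over all sequences `(u_i)` of nonnegative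
reals with `∑_{i=1}^∞ u_i ≤ c` equals `∑_{i=1}^∞ p (1-p)^{i-1} r(κ̄_s^{(i-1)}(ω c))`,
attained by `u_i = κ̄_s^{(i-1)}(ω c)`, which satisfies `∑_{i=1}^∞ u_i = c`. -/
theorem bernoulli_allocation_optimal (R : RegularReward) (p : ℝ) (hp : p ∈ Ioo (0 : ℝ) 1)
    (s : ℝ) (hs : s = 1 / (1 - p)) (c : ℝ) (hc : 0 < c)
    (ω : ℝ → ℝ)
    (hω_nonneg : ∀ x : ℝ, 0 ≤ x → 0 ≤ ω x)
    (hω_rightInv : ∀ x : ℝ, 0 ≤ x → R.η s (ω x) = x)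
    (hω_leftInv : ∀ y : ℝ, 0 ≤ y → ω (R.η s y) = y) :
    IsGreatest
      {v : ℝ | ∃ u : ℕ → ℝ, (∀ i : ℕ, 0 ≤ u i) ∧ Summable u ∧ (∑' i : ℕ, u i) ≤ c ∧
        v = ∑' i : ℕ, p * (1 - p) ^ i * R.r (u i)}
      (∑' i : ℕ, p * (1 - p) ^ i * R.r ((R.kbar s)^[i] (ω c))) ∧
      (∑' i : ℕ, (R.kbar s)^[i] (ω c)) = c :=
  bernoulli_allocation_optimal_general R p hp s hs c hc ω hω_nonneg hω_rightInv
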